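/- Let B be a commutative ring and P, Q be B-modules. Then P is finitely generated and projective over B if and only if there exist B-linear maps η : B → Q ⊗_B P and θ : P ⊗_B Q → B satisfying the triangle identities: the composite Q ≅ B ⊗_B Q → (Q ⊗_B P) ⊗_B Q ≅ Q ⊗_B (P ⊗_B Q) → Q ⊗_B B ≅ Q (using η ⊗ id_Q and id_Q ⊗ θ) is the identity of Q, and the composite P ≅ P ⊗_B B → P ⊗_B (Q ⊗_B P) ≅ (P ⊗_B Q) ⊗_B P → B ⊗_B P ≅ P (using id_P ⊗ η and θ ⊗ id_P) is the identity of P. In the 'only if' direction one may take Q = Hom_B(P,B). -/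

import Mathlib

open TensorProduct

/-- The two triangle identities for a pair of `B`-linear maps
`η : B → Q ⊗[B] P` (coevaluation) and `θ : P ⊗[B] Q → B` (evaluation):
the composite `Q ≅ B ⊗ Q → (Q ⊗ P) ⊗ Q ≅ Q ⊗ (P ⊗ Q) → Q ⊗ B ≅ Q` is the identity,
and the composite `P ≅ P ⊗ B → P ⊗ (Q ⊗ P) ≅ (P ⊗ Q) ⊗ P → B ⊗ P ≅ P` is the identity. -/
def TriangleIdentities (B : Type*) [CommRing B]
    (P : Type*) [AddCommGroup P] [Module B P]
    (Q : Type*) [AddCommGroup Q] [Module B Q]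
    (η : B →ₗ[B] Q ⊗[B] P) (θ : P ⊗[B] Q →ₗ[B] B) : Prop :=
  (∀ q : Q,
    (TensorProduct.rid B Q)
      ((LinearMap.lTensor Q θ)
        ((TensorProduct.assoc B Q P Q)
          ((LinearMap.rTensor Q η) ((TensorProduct.lid B Q).symm q)))) = q) ∧
  (∀ p : P,
    (TensorProduct.lid B P)
      ((LinearMap.rTensor P θ)
        ((TensorProduct.assoc B P Q P).symm
          ((LinearMap.lTensor P η) ((TensorProduct.rid B P).symm p)))) = p)

/-! Writing `η 1 = ∑ qᵢ ⊗ pᵢ`, the second triangle identity says `p = ∑ θ (p ⊗ qᵢ) • pᵢ`: the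
functionals `θ (· ⊗ qᵢ)` and the elements `pᵢ` form a finite dual basis, i.e. the identity of `P`
lies in the image of `P* ⊗ P → End P`, which makes `P` finite projective. Conversely, for `P`
finite projective that map is bijective; the preimage of the identity is a coevaluation for the
evaluation `p ⊗ f ↦ f p`. -/

section

variable {R P Q : Type*} [CommSemiring R] [AddCommMonoid P] [Module R P]
  [AddCommMonoid Q] [Module R Q]

theorem lid_rTensor_assoc_symm_tmul (θ : P ⊗[R] Q →ₗ[R] R) (p : P) (x : Q ⊗[R] P) :
    TensorProduct.lid R P (θ.rTensor P ((TensorProduct.assoc R P Q P).symm (p ⊗ₜ x))) =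
      dualTensorHom R P P ((TensorProduct.curry θ).flip.rTensor P x) p := by
  induction x using TensorProduct.induction_on with
  | zero => simp
  | tmul q p' => simp
  | add x y hx hy => simp only [tmul_add, map_add, hx, hy, LinearMap.add_apply]

theorem rid_lTensor_contractRight_assoc_tmul (x : Module.Dual R P ⊗[R] P) (f : Module.Dual R P) :
    TensorProduct.rid R (Module.Dual R P) ((contractRight R P).lTensor (Module.Dual R P)
        (TensorProduct.assoc R (Module.Dual R P) P (Module.Dual R P) (x ⊗ₜ f))) =
      f ∘ₗ dualTensorHom R P P x := by
  induction x using TensorProduct.induction_on with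
  | zero => ext; simp
  | tmul g p => ext; simp [mul_comm]
  | add x y hx hy => simp only [add_tmul, map_add, hx, hy, LinearMap.comp_add]

end

theorem TriangleIdentities.one_mem_range_dualTensorHom {B P Q : Type*} [CommRing B]
    [AddCommGroup P] [Module B P] [AddCommGroup Q] [Module B Q]
    {η : B →ₗ[B] Q ⊗[B] P} {θ : P ⊗[B] Q →ₗ[B] B} (h : TriangleIdentities B P Q η θ) :
    1 ∈ LinearMap.range (dualTensorHom B P P) :=
  ⟨(TensorProduct.curry θ).flip.rTensor P (η 1), LinearMap.ext fun p => by
    simpa [lid_rTensor_assoc_symm_tmul] using h.2 p⟩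

theorem triangleIdentities_of_dualTensorHom_eq_id {B P : Type*} [CommRing B]
    [AddCommGroup P] [Module B P] {t : Module.Dual B P ⊗[B] P}
    (ht : dualTensorHom B P P t = LinearMap.id) :
    TriangleIdentities B P (P →ₗ[B] B) (LinearMap.toSpanSingleton B _ t) (contractRight B P) := by
  constructor
  · intro f
    simpa [ht] using rid_lTensor_contractRight_assoc_tmul t f
  · intro p
    have hθ : (curry (contractRight B P)).flip = LinearMap.id := by ext; simp
    simp [lid_rTensor_assoc_symm_tmul, hθ, ht]

/-- a `B`-module `P` is finitely generated and projective if and only if it is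
dualizable, i.e. there are `η : B → Q ⊗_B P` and `θ : P ⊗_B Q → B` satisfying the triangle
identities (for the given module `Q`, the existence of such maps forces `P` to be finitely
generated projective; conversely, if `P` is finitely generated projective then such maps
exist with `Q = Hom_B(P,B)`). -/
theorem finite_projective_iff_dualizable (B : Type*) [CommRing B]
    (P : Type*) [AddCommGroup P] [Module B P]
    (Q : Type*) [AddCommGroup Q] [Module B Q] :
    ((∃ (η : B →ₗ[B] Q ⊗[B] P) (θ : P ⊗[B] Q →ₗ[B] B),
        TriangleIdentities B P Q η θ) →
      (Module.Finite B P ∧ Module.Projective B P)) ∧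
    ((Module.Finite B P ∧ Module.Projective B P) →
      ∃ (η : B →ₗ[B] (P →ₗ[B] B) ⊗[B] P) (θ : P ⊗[B] (P →ₗ[B] B) →ₗ[B] B),
        TriangleIdentities B P (P →ₗ[B] B) η θ) := by
  refine ⟨fun ⟨η, θ, h⟩ => ?_, fun ⟨_, _⟩ => ?_⟩
  · have h1 := h.one_mem_range_dualTensorHom
    exact ⟨.of_one_mem_range_dualTensorHom h1, .of_one_mem_range_dualTensorHom h1⟩
  · obtain ⟨t, ht⟩ := (dualTensorHom_bijective (R := B) (M := P) (N := P)).2 LinearMap.id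
    exact ⟨_, _, triangleIdentities_of_dualTensorHom_eq_id ht⟩
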